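/- Let (X, ⊥, F) be an O-space. Then for all A, B, C ∈ F: A ⊗ B^⊥ ⊆ C if and only if A ⊆ B ⊕ C. -/
import Mathlib


variable {X : Type*}

/-- Orthogonal complement: `A^⊥ = {b : b ⊥ a for all a ∈ A}`. -/
def oc (R : X → X → Prop) (A : Set X) : Set X := {b | ∀ a ∈ A, R b a}

/-- Closure: `cl(A) = (A^⊥)^⊥`. -/
def ocl (R : X → X → Prop) (A : Set X) : Set X := oc R (oc R A)

/-- The zero set `Z = {y : y ⊥ x for all x}`. -/
def zset (R : X → X → Prop) : Set X := {y | ∀ x, R y x}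

/-- Sasaki projection `A ⊗ B = cl(B) ∩ (cl(B) ∩ A^⊥)^⊥`. -/
def sproj (R : X → X → Prop) (A B : Set X) : Set X :=
  ocl R B ∩ oc R (ocl R B ∩ oc R A)

/-- Dual of the Sasaki projection: `A ⊕ B = (B^⊥ ⊗ A^⊥)^⊥`. -/
def sdual (R : X → X → Prop) (A B : Set X) : Set X :=
  oc R (sproj R (oc R B) (oc R A))

/-- Set orthogonality: `A ⊥ B` iff `a ⊥ b` for all `a ∈ A`, `b ∈ B`. -/
def orth (R : X → X → Prop) (A B : Set X) : Prop := ∀ a ∈ A, ∀ b ∈ B, R a b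

/-- An O-space: a symmetric relation satisfying Z, together with a family `F`
of subsets satisfying properties F, O and A. -/
structure IsOSpace (R : X → X → Prop) (F : Set (Set X)) : Prop where
  symm : ∀ x y : X, R x y → R y x
  zero : ∀ x : X, R x x → x ∈ zset R
  flats : ∀ A ∈ F, A = ocl R A
  singcl_mem : ∀ x : X, ocl R {x} ∈ F
  z_mem : zset R ∈ F
  oc_mem : ∀ A ∈ F, oc R A ∈ F
  sproj_mem : ∀ A ∈ F, ∀ B ∈ F, sproj R A B ∈ F
  o1 : ∀ x : X, ∀ A ∈ F, x ∈ ocl R (sproj R {x} A ∪ sproj R {x} (oc R A))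
  o2 : ∀ x : X, ∀ A ∈ F, sproj R {x} A ⊆ ocl R ({x} ∪ sproj R {x} (oc R A))
  a : ∀ A ∈ F, ∀ B ∈ F, sproj R A B ⊆ ⋃ a ∈ A, sproj R {a} B

section OSpaceAux

variable (R : X → X → Prop)

lemma oc_anti {A B : Set X} (h : A ⊆ B) : oc R B ⊆ oc R A :=
  fun _x hx a ha => hx a (h ha)

lemma subset_ocl (hs : ∀ x y : X, R x y → R y x) (A : Set X) :
    A ⊆ ocl R A := fun x hx b hb => hs b x (hb x hx)

lemma oc_ocl (hs : ∀ x y : X, R x y → R y x) (A : Set X) :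
    oc R (ocl R A) = oc R A :=
  Set.Subset.antisymm (oc_anti R (subset_ocl R hs A)) (subset_ocl R hs (oc R A))

lemma ocl_oc (hs : ∀ x y : X, R x y → R y x) (A : Set X) :
    ocl R (oc R A) = oc R A := oc_ocl R hs A

lemma sproj_mono {A A' : Set X} (h : A ⊆ A') (D : Set X) :
    sproj R A D ⊆ sproj R A' D := by
  intro x hx
  exact ⟨hx.1, fun b hb => hx.2 b ⟨hb.1, fun a ha => hb.2 a (h ha)⟩⟩

lemma sproj_subset_ocl (A D : Set X) : sproj R A D ⊆ ocl R D :=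
  Set.inter_subset_left

variable {F : Set (Set X)}

/-- Pointwise symmetry: if `{x} ⊗ D ⊥ y` then `{y} ⊗ D ⊥ x`. -/
lemma point_symm (h : IsOSpace R F) {D : Set X} (hD : D ∈ F) (hDf : ocl R D = D)
    {x y : X} (hxy : ∀ w ∈ sproj R {x} D, R w y) :
    ∀ z ∈ sproj R {y} D, R z x := by
  intro z hz
  have hoclD : ocl R (oc R D) = oc R D := ocl_oc R h.symm D
  -- z is orthogonal to everything in sproj {x} (oc D)
  have hzD : z ∈ D := hDf ▸ sproj_subset_ocl R {y} D hz
  have hz1 : ∀ s ∈ sproj R {x} (oc R D), R z s := by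
    intro s hs
    have hsD : s ∈ oc R D := hoclD ▸ sproj_subset_ocl R {x} (oc R D) hs
    exact h.symm s z (hsD z hzD)
  -- z is orthogonal to everything in sproj {x} D, via o2 applied to y
  have hz2 : ∀ s ∈ sproj R {x} D, R z s := by
    intro s hs
    have hzcl := h.o2 y D hD hz
    apply hzcl
    intro a ha
    rcases ha with ha | ha
    · rcases ha with rfl
      exact hxy s hs
    · -- a ∈ sproj {y} (oc D) ⊆ oc D, and s ∈ ocl D = D
      have haD : a ∈ oc R D := hoclD ▸ sproj_subset_ocl R {y} (oc R D) ha
      have hsD : s ∈ D := hDf ▸ sproj_subset_ocl R {x} D hs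
      exact h.symm a s (haD s hsD)
  -- conclude via o1 applied to x
  have hx := h.o1 x D hD
  have hzoc : z ∈ oc R (sproj R {x} D ∪ sproj R {x} (oc R D)) := by
    intro a ha
    rcases ha with ha | ha
    · exact hz2 a ha
    · exact hz1 a ha
  exact h.symm x z (hx z hzoc)

/-- Set-level symmetry. -/
lemma set_symm (h : IsOSpace R F) {D E G : Set X} (hD : D ∈ F) (hDf : ocl R D = D)
    (hE : E ∈ F) (hG : G ∈ F)
    (hEG : orth R (sproj R E D) G) : orth R (sproj R G D) E := by
  intro z hz e he
  have := h.a G hG D hD hz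
  simp only [Set.mem_iUnion] at this
  obtain ⟨g, hg, hz'⟩ := this
  refine point_symm R h hD hDf (x := e) (y := g) ?_ z hz'
  intro w hw
  exact hEG w (sproj_mono R (Set.singleton_subset_iff.mpr he) D hw) g hg

end OSpaceAux

theorem stmt17 (R : X → X → Prop) (F : Set (Set X)) (h : IsOSpace R F)
    (A B C : Set X) (hA : A ∈ F) (hB : B ∈ F) (hC : C ∈ F) :
    sproj R A (oc R B) ⊆ C ↔ A ⊆ sdual R B C := by
  have hDf : ocl R (oc R B) = oc R B := ocl_oc R h.symm B
  have hD : oc R B ∈ F := h.oc_mem B hB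
  have hCoc : oc R C ∈ F := h.oc_mem C hC
  constructor
  · intro hsub a ha w hw
    -- show orth (sproj (oc C) (oc B)) A, then use at w, a
    have hEG : orth R (sproj R A (oc R B)) (oc R C) := by
      intro u hu v hv
      exact h.symm v u (hv u (hsub hu))
    have := set_symm R h hD hDf hA hCoc hEG w hw a ha
    exact h.symm w a this
  · intro hsub u hu
    have hEG : orth R (sproj R (oc R C) (oc R B)) A := by
      intro w hw a ha
      exact h.symm a w (hsub ha w hw)
    have horth : orth R (sproj R A (oc R B)) (oc R C) :=
      set_symm R h hD hDf hCoc hA hEG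
    have huC : u ∈ ocl R C := fun b hb => horth u hu b hb
    rw [h.flats C hC]
    exact huC
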